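/- arXiv:hep-th/9701089 — 8 statements merged into one kernel-verified Lean document; each statement's English description precedes it below -/
import Mathlib

section
/- For every probability measure μ on the space of triples of two-valued outcomes Bool × Bool × Bool, the measure of the event {s : s.1 = true ∧ s.2.2 = false} is at most the measure of the event {s : s.1 = true ∧ s.2.1 = false} plus the measure of the event {s : s.2.1 = true ∧ s.2.2 = false}. -/
open MeasureTheory

/-- Wigner's set-inclusion inequality: for any probability measure on triples of
two-valued outcomes, `P(+, ·, −) ≤ P(+, −, ·) + P(·, +, −)`. -/
theorem wigner_inequality (μ : Measure (Bool × Bool × Bool)) [IsProbabilityMeasure μ] :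
    μ {s : Bool × Bool × Bool | s.1 = true ∧ s.2.2 = false} ≤
      μ {s : Bool × Bool × Bool | s.1 = true ∧ s.2.1 = false} +
        μ {s : Bool × Bool × Bool | s.2.1 = true ∧ s.2.2 = false} := by
  refine le_trans (measure_mono ?_) (measure_union_le _ _)
  rintro ⟨a, b, c⟩ ⟨ha, hc⟩
  cases b
  · exact Or.inl ⟨ha, rfl⟩
  · exact Or.inr ⟨rfl, hc⟩
end

section
/- Let μ be a probability measure on Bool × Bool × Bool and let θ₁₂, θ₂₃, θ₁₃ be real numbers such that μ({s : s.1 = true ∧ s.2.1 = false}) = (1/2)·sin²(θ₁₂/2), μ({s : s.2.1 = true ∧ s.2.2 = false}) = (1/2)·sin²(θ₂₃/2), and μ({s : s.1 = true ∧ s.2.2 = false}) = (1/2)·sin²(θ₁₃/2). Then sin²(θ₁₃/2) ≤ sin²(θ₁₂/2) + sin²(θ₂₃/2). -/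
open MeasureTheory Real

/-- Bell's inequality in the form used in the paper: if the pair probabilities of
observing (up, down) at relative angles `θ₁₂`, `θ₂₃`, `θ₁₃` are the quantum values
`(1/2)·sin²(θ/2)`, then `sin²(θ₁₃/2) ≤ sin²(θ₁₂/2) + sin²(θ₂₃/2)`. -/
theorem bell_inequality (μ : Measure (Bool × Bool × Bool)) [IsProbabilityMeasure μ]
    (θ₁₂ θ₂₃ θ₁₃ : ℝ)
    (h12 : μ {s : Bool × Bool × Bool | s.1 = true ∧ s.2.1 = false} =
      ENNReal.ofReal ((1 / 2) * Real.sin (θ₁₂ / 2) ^ 2))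
    (h23 : μ {s : Bool × Bool × Bool | s.2.1 = true ∧ s.2.2 = false} =
      ENNReal.ofReal ((1 / 2) * Real.sin (θ₂₃ / 2) ^ 2))
    (h13 : μ {s : Bool × Bool × Bool | s.1 = true ∧ s.2.2 = false} =
      ENNReal.ofReal ((1 / 2) * Real.sin (θ₁₃ / 2) ^ 2)) :
    Real.sin (θ₁₃ / 2) ^ 2 ≤ Real.sin (θ₁₂ / 2) ^ 2 + Real.sin (θ₂₃ / 2) ^ 2 := by
  have hsub : {s : Bool × Bool × Bool | s.1 = true ∧ s.2.2 = false} ⊆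
      {s : Bool × Bool × Bool | s.1 = true ∧ s.2.1 = false} ∪
      {s : Bool × Bool × Bool | s.2.1 = true ∧ s.2.2 = false} := by
    rintro ⟨a, b, c⟩ ⟨ha, hc⟩
    cases b
    · exact Or.inl ⟨ha, rfl⟩
    · exact Or.inr ⟨rfl, hc⟩
  have hle : μ {s : Bool × Bool × Bool | s.1 = true ∧ s.2.2 = false} ≤
      μ {s : Bool × Bool × Bool | s.1 = true ∧ s.2.1 = false} +
      μ {s : Bool × Bool × Bool | s.2.1 = true ∧ s.2.2 = false} :=
    (measure_mono hsub).trans (measure_union_le _ _)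
  rw [h12, h23, h13, ← ENNReal.ofReal_add (by positivity) (by positivity)] at hle
  have := (ENNReal.ofReal_le_ofReal_iff (by positivity)).mp hle
  linarith
end

section
/- There is no probability measure μ on Bool × Bool × Bool satisfying μ({s : s.1 = true ∧ s.2.1 = false}) = (1/2)·sin²(π/6), μ({s : s.2.1 = true ∧ s.2.2 = false}) = (1/2)·sin²(π/6), and μ({s : s.1 = true ∧ s.2.2 = false}) = (1/2)·sin²(π/3). -/
open MeasureTheory Real

/-- The Coupling Principle (mathematical core of Theorem 1): there is no probability
measure on triples of outcomes reproducing the quantum pair probabilities for the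
angles `θ₁₂ = θ₂₃ = π/3` and `θ₁₃ = 2π/3`. -/
theorem coupling_principle :
    ¬ ∃ μ : Measure (Bool × Bool × Bool), IsProbabilityMeasure μ ∧
      μ {s : Bool × Bool × Bool | s.1 = true ∧ s.2.1 = false} =
        ENNReal.ofReal ((1 / 2) * Real.sin (Real.pi / 6) ^ 2) ∧
      μ {s : Bool × Bool × Bool | s.2.1 = true ∧ s.2.2 = false} =
        ENNReal.ofReal ((1 / 2) * Real.sin (Real.pi / 6) ^ 2) ∧
      μ {s : Bool × Bool × Bool | s.1 = true ∧ s.2.2 = false} =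
        ENNReal.ofReal ((1 / 2) * Real.sin (Real.pi / 3) ^ 2) := by
  rintro ⟨μ, _, h12, h23, h13⟩
  have hsub : {s : Bool × Bool × Bool | s.1 = true ∧ s.2.2 = false} ⊆
      {s : Bool × Bool × Bool | s.1 = true ∧ s.2.1 = false} ∪
      {s : Bool × Bool × Bool | s.2.1 = true ∧ s.2.2 = false} := by
    rintro ⟨a, b, c⟩ ⟨ha, hc⟩
    cases b
    · exact Or.inl ⟨ha, rfl⟩
    · exact Or.inr ⟨rfl, hc⟩
  have hle : μ {s : Bool × Bool × Bool | s.1 = true ∧ s.2.2 = false} ≤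
      μ {s : Bool × Bool × Bool | s.1 = true ∧ s.2.1 = false} +
      μ {s : Bool × Bool × Bool | s.2.1 = true ∧ s.2.2 = false} :=
    le_trans (measure_mono hsub) (measure_union_le _ _)
  rw [h12, h23, h13] at hle
  rw [Real.sin_pi_div_six, Real.sin_pi_div_three] at hle
  rw [← ENNReal.ofReal_add (by positivity) (by positivity)] at hle
  have := (ENNReal.ofReal_le_ofReal_iff (by positivity)).mp hle
  nlinarith [Real.sq_sqrt (by norm_num : (3:ℝ) ≥ 0)]
end

section
/- Let Λ be a type, n : ℕ, and ψ : Fin n → Λ → ℂ a linearly independent family of functions. For each permutation σ ∈ Equiv.Perm (Fin n) define F_σ : (Fin n → Λ) → ℂ by F_σ(λ) = ∏_{k : Fin n} ψ k (λ (σ k)). Then the family (F_σ)_{σ ∈ Equiv.Perm (Fin n)} is linearly independent in the space of functions (Fin n → Λ) → ℂ. -/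
/-!
A product `a i x * b j y` of two linearly independent families in separate variables is again
independent: freezing `y`, independence of `a` kills each `∑ j, c (i, j) * b j y`, and then
independence of `b` kills each `c (i, j)`. Iterating, the products `∏ k, ψ (f k) (λ k)` over all
maps `f : Fin n → Fin n` are independent, and `F_σ` is the one with `f = σ⁻¹`.
-/

section

variable {R ι κ X Y : Type*} [CommRing R]

theorem LinearIndependent.comp_domain_equiv {v : ι → X → R} (hv : LinearIndependent R v)
    (e : Y ≃ X) : LinearIndependent R fun i y => v i (e y) :=
  hv.map' (LinearEquiv.funCongrLeft R R e).toLinearMap (LinearEquiv.ker _)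

theorem LinearIndependent.mul_fst_snd [Fintype ι] [Fintype κ] {a : ι → X → R} {b : κ → Y → R}
    (ha : LinearIndependent R a) (hb : LinearIndependent R b) :
    LinearIndependent R fun p : ι × κ => fun z : X × Y => a p.1 z.1 * b p.2 z.2 := by
  rw [Fintype.linearIndependent_iff] at ha hb ⊢
  intro c hc ⟨i, j⟩
  have hslice : ∀ y i, ∑ j, c (i, j) * b j y = 0 := fun y =>
    ha (fun i => ∑ j, c (i, j) * b j y) <| funext fun x => by
      simpa [Fintype.sum_prod_type, Finset.mul_sum, mul_comm, mul_left_comm]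
        using congrFun hc (x, y)
  exact hb (fun j => c (i, j)) (funext fun y => by simpa using hslice y i) j

theorem LinearIndependent.prod_fin_tuple [Fintype ι] [Nontrivial R] {ψ : ι → X → R}
    (hψ : LinearIndependent R ψ) (m : ℕ) :
    LinearIndependent R fun f : Fin m → ι => fun x : Fin m → X => ∏ k, ψ (f k) (x k) := by
  induction m with
  | zero =>
    refine Fintype.linearIndependent_iff.mpr fun c hc f => ?_
    simpa [Subsingleton.elim f default] using congrFun hc Fin.elim0
  | succ m ih =>
    have h := (hψ.mul_fst_snd ih).comp_domain_equiv (Fin.consEquiv fun _ => X).symm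
    refine (linearIndependent_equiv (Fin.consEquiv fun _ => ι)).mp ?_
    convert h using 1
    ext f x
    simp [Fin.prod_univ_succ, Fin.consEquiv, Fin.tail]

end

/-- Linear independence of the permuted product states: if the one-particle states
`ψ k` are linearly independent, then the family of permuted products
`F_σ(λ) = ∏ k, ψ k (λ (σ k))`, indexed by `σ ∈ Perm (Fin n)`, is linearly
independent. -/
theorem permuted_products_linearIndependent {Λ : Type*} (n : ℕ) (ψ : Fin n → Λ → ℂ)
    (hψ : LinearIndependent ℂ ψ) :
    LinearIndependent ℂ (fun σ : Equiv.Perm (Fin n) =>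
      (fun lam : Fin n → Λ => ∏ k : Fin n, ψ k (lam (σ k)))) := by
  have hinj : Function.Injective fun σ : Equiv.Perm (Fin n) => (σ.symm : Fin n → Fin n) :=
    fun _ _ h => Equiv.symm_bijective.injective (DFunLike.coe_injective h)
  have hreindex : (fun σ : Equiv.Perm (Fin n) => fun lam : Fin n → Λ => ∏ k, ψ k (lam (σ k))) =
      (fun f : Fin n → Fin n => fun lam : Fin n → Λ => ∏ k, ψ (f k) (lam k)) ∘
        fun σ : Equiv.Perm (Fin n) => (σ.symm : Fin n → Fin n) := by
    ext σ lam
    simpa using Equiv.prod_comp σ fun i => ψ (σ.symm i) (lam i)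
  rw [hreindex]
  exact (hψ.prod_fin_tuple n).comp _ hinj
end

section
/- Let Λ be a type and ψ₁, ψ₂, ψ₃ : Λ → ℂ. Assume (i) ψ₁, ψ₂, ψ₃ are linearly independent, and (ii) the three pairwise product functions ψ₁·ψ₂, ψ₁·ψ₃, ψ₂·ψ₃ : Λ → ℂ are linearly independent. Let c : Equiv.Perm (Fin 3) → ℂ and define Ψ : (Fin 3 → Λ) → ℂ by Ψ(λ) = Σ_{σ} c σ · ∏_{k} ψ k (λ (σ k)). If Ψ(λ) = 0 whenever λ i = λ j for some i ≠ j, then c σ = Equiv.Perm.sign σ · c 1 for every σ, and hence Ψ(λ) = c 1 · det (Matrix.of fun i j => ψ i (λ j)) for all λ. -/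
lemma fin3_cover : ∀ i j m k : Fin 3, i ≠ j → j ≠ m → i ≠ m → k = i ∨ k = j ∨ k = m := by
  decide

lemma perm_fix (i j m : Fin 3) (hij : i ≠ j) (hjm : j ≠ m) (him : i ≠ m)
    (π : Equiv.Perm (Fin 3)) (hm : π m = m) : π = 1 ∨ π = Equiv.swap i j := by
  have hjj : π j ≠ π m := fun h => hjm (π.injective h)
  rcases fin3_cover i j m (π i) hij hjm him with hi | hi | hi
  · left
    apply Equiv.ext; intro k
    have hj : π j = j := by
      rcases fin3_cover i j m (π j) hij hjm him with h | h | h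
      · exact absurd (π.injective (h.trans hi.symm)) hij.symm
      · exact h
      · exact absurd (h.trans hm.symm) hjj
    rcases fin3_cover i j m k hij hjm him with hk | hk | hk <;>
      simp [hk, hi, hj, hm]
  · right
    apply Equiv.ext; intro k
    have hj : π j = i := by
      rcases fin3_cover i j m (π j) hij hjm him with h | h | h
      · exact h
      · exact absurd (π.injective (h.trans hi.symm)) hij.symm
      · exact absurd (h.trans hm.symm) hjj
    rcases fin3_cover i j m k hij hjm him with hk | hk | hk
    · rw [hk, hi, Equiv.swap_apply_left]
    · rw [hk, hj, Equiv.swap_apply_right]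
    · rw [hk, hm, Equiv.swap_apply_of_ne_of_ne him.symm hjm.symm]
  · exact absurd (π.injective (hi.trans hm.symm)) him

/-- Theorem 2 (Pauli Exclusion Principle), three-particle case: if the permutation-product
state `Ψ(λ) = Σ_σ c_σ ∏_k ψ_k(λ(σk))` vanishes whenever two coordinates coincide, then
`c_σ = sign σ · c_1` for every `σ`, i.e. `Ψ` is `c_1` times the Slater determinant. -/
theorem pauli_three_particles {Λ : Type*} (ψ : Fin 3 → Λ → ℂ)
    (h1 : LinearIndependent ℂ ψ)
    (h2 : LinearIndependent ℂ ![ψ 0 * ψ 1, ψ 0 * ψ 2, ψ 1 * ψ 2])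
    (c : Equiv.Perm (Fin 3) → ℂ)
    (Ψ : (Fin 3 → Λ) → ℂ)
    (hΨ : ∀ lam : Fin 3 → Λ,
      Ψ lam = ∑ σ : Equiv.Perm (Fin 3), c σ * ∏ k : Fin 3, ψ k (lam (σ k)))
    (hvanish : ∀ lam : Fin 3 → Λ, (∃ i j : Fin 3, i ≠ j ∧ lam i = lam j) → Ψ lam = 0) :
    (∀ σ : Equiv.Perm (Fin 3), c σ = ((Equiv.Perm.sign σ : ℤ) : ℂ) * c 1) ∧
      ∀ lam : Fin 3 → Λ, Ψ lam = c 1 * (Matrix.of fun i j => ψ i (lam j)).det := by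
  classical
  -- nonvanishing of pair products
  have hp01 : ψ 0 * ψ 1 ≠ 0 := by
    have := h2.ne_zero 0; simpa using this
  have hp02 : ψ 0 * ψ 2 ≠ 0 := by
    have := h2.ne_zero 1; simpa using this
  have hp12 : ψ 1 * ψ 2 ≠ 0 := by
    have := h2.ne_zero 2; simpa using this
  -- key swap relation
  have key : ∀ i j m : Fin 3, i ≠ j → j ≠ m → i ≠ m →
      ∀ σ : Equiv.Perm (Fin 3), c (Equiv.swap i j * σ) = - c σ := by
    intro i j m hij hjm him σ
    set A : Fin 3 → ℂ := fun t =>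
      ∑ τ ∈ Finset.univ.filter (fun τ : Equiv.Perm (Fin 3) => τ⁻¹ m = t), c τ with hA
    have E : ∀ x y : Λ,
        A 0 * (ψ 1 x * ψ 2 x) * ψ 0 y + A 1 * (ψ 0 x * ψ 2 x) * ψ 1 y
          + A 2 * (ψ 0 x * ψ 1 x) * ψ 2 y = 0 := by
      intro x y
      set lam : Fin 3 → Λ := fun k => if k = m then y else x with hlam
      have h0 : Ψ lam = 0 := by
        refine hvanish lam ⟨i, j, hij, ?_⟩
        simp [hlam, him, hjm]
      rw [hΨ] at h0
      have hprod : ∀ τ : Equiv.Perm (Fin 3),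
          (∏ k : Fin 3, ψ k (lam (τ k))) =
            ∏ k : Fin 3, ψ k (if k = τ⁻¹ m then y else x) := by
        intro τ
        refine Finset.prod_congr rfl fun k _ => ?_
        have : (τ k = m) = (k = τ⁻¹ m) := by
          simp [Equiv.apply_eq_iff_eq_symm_apply, Equiv.Perm.inv_def]
        simp [hlam, this, Equiv.Perm.inv_def]
      calc A 0 * (ψ 1 x * ψ 2 x) * ψ 0 y + A 1 * (ψ 0 x * ψ 2 x) * ψ 1 y
            + A 2 * (ψ 0 x * ψ 1 x) * ψ 2 y
          = ∑ t : Fin 3, A t * ∏ k : Fin 3, ψ k (if k = t then y else x) := by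
            simp [Fin.sum_univ_three, Fin.prod_univ_three]
            ring
        _ = ∑ t : Fin 3, ∑ τ ∈ Finset.univ.filter
              (fun τ : Equiv.Perm (Fin 3) => τ⁻¹ m = t),
              c τ * ∏ k : Fin 3, ψ k (if k = τ⁻¹ m then y else x) := by
            refine Finset.sum_congr rfl fun t _ => ?_
            rw [hA, Finset.sum_mul]
            refine Finset.sum_congr rfl fun τ hτ => ?_
            rw [(Finset.mem_filter.mp hτ).2]
        _ = ∑ τ : Equiv.Perm (Fin 3),
              c τ * ∏ k : Fin 3, ψ k (if k = τ⁻¹ m then y else x) :=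
            Finset.sum_fiberwise _ _ _
        _ = 0 := by
            rw [← h0]
            exact Finset.sum_congr rfl fun τ _ => by rw [hprod τ]
    -- from linear independence, A t = 0 for all t
    have hAzero : ∀ t : Fin 3, A t = 0 := by
      have hxcoef : ∀ x : Λ,
          A 0 * (ψ 1 x * ψ 2 x) = 0 ∧ A 1 * (ψ 0 x * ψ 2 x) = 0 ∧
            A 2 * (ψ 0 x * ψ 1 x) = 0 := by
        intro x
        have := Fintype.linearIndependent_iff.mp h1
          (fun t => A t * ![ψ 1 x * ψ 2 x, ψ 0 x * ψ 2 x, ψ 0 x * ψ 1 x] t)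
          (by
            funext y
            have := E x y
            simp only [Fin.sum_univ_three]
            simp only [Matrix.cons_val_zero, Matrix.cons_val_one, Matrix.head_cons, Matrix.cons_val_two, Matrix.tail_cons,
              Pi.add_apply, Pi.smul_apply, smul_eq_mul, Pi.zero_apply]
            linear_combination this)
        exact ⟨by simpa using this 0, by simpa using this 1, by simpa using this 2⟩
      have hone : ∀ (f g : Λ → ℂ) (a : ℂ), f * g ≠ 0 → (∀ x, a * (f x * g x) = 0) → a = 0 := by
        intro f g a hfg h
        by_contra ha
        apply hfg
        funext x
        have := h x
        rcases mul_eq_zero.mp this with h' | h'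
        · exact absurd h' ha
        · simpa using h'
      intro t
      rcases fin3_cover 0 1 2 t (by decide) (by decide) (by decide) with rfl | rfl | rfl
      · exact hone (ψ 1) (ψ 2) (A 0) hp12 (fun x => (hxcoef x).1)
      · exact hone (ψ 0) (ψ 2) (A 1) hp02 (fun x => (hxcoef x).2.1)
      · exact hone (ψ 0) (ψ 1) (A 2) hp01 (fun x => (hxcoef x).2.2)
    -- the fiber over σ⁻¹ m is {σ, swap i j * σ}
    have hfiber : Finset.univ.filter
        (fun τ : Equiv.Perm (Fin 3) => τ⁻¹ m = σ⁻¹ m)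
          = {σ, Equiv.swap i j * σ} := by
      ext τ
      simp only [Finset.mem_filter, Finset.mem_univ, true_and, Finset.mem_insert,
        Finset.mem_singleton]
      constructor
      · intro h
        have hm : (τ * σ⁻¹) m = m := by
          have : σ⁻¹ m = τ⁻¹ m := h.symm
          simp [Equiv.Perm.mul_apply, this]
        rcases perm_fix i j m hij hjm him (τ * σ⁻¹) hm with h' | h'
        · left
          have := congrArg (· * σ) h'
          simpa [mul_assoc] using this
        · right
          have := congrArg (· * σ) h'
          simpa [mul_assoc] using this
      · rintro (rfl | rfl)
        · rfl
        · have : (Equiv.swap i j * σ)⁻¹ m = σ⁻¹ (Equiv.swap i j m) := by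
            simp [Equiv.Perm.mul_apply, Equiv.swap_inv]
          rw [this, Equiv.swap_apply_of_ne_of_ne him.symm hjm.symm]
    have hne : σ ≠ Equiv.swap i j * σ := by
      intro h
      have : (1 : Equiv.Perm (Fin 3)) = Equiv.swap i j := by
        have := congrArg (· * σ⁻¹) h
        simpa [mul_assoc] using this
      exact hij (Equiv.swap_eq_one_iff.mp this.symm)
    have := hAzero (σ⁻¹ m)
    rw [hA] at this
    simp only at this
    rw [hfiber, Finset.sum_pair hne] at this
    linear_combination this
  -- part 1: c σ = sign σ * c 1
  have hthird : ∀ x y : Fin 3, x ≠ y → ∃ m : Fin 3, x ≠ y ∧ y ≠ m ∧ x ≠ m := by decide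
  have part1 : ∀ σ : Equiv.Perm (Fin 3),
      c σ = ((Equiv.Perm.sign σ : ℤ) : ℂ) * c 1 := by
    intro σ
    refine Equiv.Perm.swap_induction_on σ (by simp) fun f x y hxy ih => ?_
    obtain ⟨m, _, hym, hxm⟩ := hthird x y hxy
    rw [key x y m hxy hym hxm f, ih]
    rw [Equiv.Perm.sign_mul, Equiv.Perm.sign_swap hxy]
    push_cast
    ring
  refine ⟨part1, fun lam => ?_⟩
  rw [hΨ, Matrix.det_apply']
  rw [Finset.mul_sum]
  refine Fintype.sum_equiv (Equiv.inv (Equiv.Perm (Fin 3))) _ _ fun σ => ?_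
  simp only [Equiv.inv_apply]
  rw [part1 σ]
  have hsign : ((Equiv.Perm.sign σ⁻¹ : ℤ) : ℂ) = ((Equiv.Perm.sign σ : ℤ) : ℂ) := by
    rw [Equiv.Perm.sign_inv]
  have hprod : (∏ i : Fin 3, Matrix.of (fun i j => ψ i (lam j)) (σ⁻¹ i) i)
      = ∏ k : Fin 3, ψ k (lam (σ k)) := by
    rw [← Equiv.prod_comp σ (fun i => Matrix.of (fun i j => ψ i (lam j)) (σ⁻¹ i) i)]
    refine Finset.prod_congr rfl fun k _ => ?_
    simp
  rw [hprod, hsign]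
  ring
end

section
/- Let Λ be a type, n : ℕ, ψ : Fin n → Λ → ℂ, and fix i j : Fin n with i ≠ j. Assume (i) the family ψ is linearly independent, and (ii) the pairwise product functions ψ a · ψ b : Λ → ℂ, indexed by unordered pairs {a, b} with a ≠ b, form a linearly independent family. Let c : Equiv.Perm (Fin n) → ℂ and define Ψ : (Fin n → Λ) → ℂ by Ψ(λ) = Σ_{σ} c σ · ∏_{k} ψ k (λ (σ k)). If Ψ(λ) = 0 for every λ with λ i = λ j, then c (Equiv.swap i j * σ) = − c σ for every permutation σ. -/
/-!
On the diagonal `λ i = λ j = t`, the summand of `σ` in `Ψ` is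
`c σ · (ψ a * ψ b) t · ∏_{m ≠ i, j} ψ (σ⁻¹ m) (λ m)` with `{a, b} = {σ⁻¹ i, σ⁻¹ j}`.
Independence of the pair products and of the `ψ k` makes these product functions of
`(t, (λ m)_{m ≠ i, j})` independent, so the coefficients of each of them sum to zero.
The permutations producing the same function as `σ` are exactly `σ` and `swap i j * σ`.
-/

open Finset Function Equiv

theorem LinearIndependent.sum_fiber_eq_zero {R M ι L : Type*} [Semiring R] [AddCommMonoid M]
    [Module R M] [DecidableEq ι] {v : ι → M} (hv : LinearIndependent R v) {s : Finset L}
    (g : L → ι) (b : L → R) (h : ∑ l ∈ s, b l • v (g l) = 0) (k : ι) :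
    ∑ l ∈ s with g l = k, b l = 0 := by
  have hzero : ∑ l ∈ s, Finsupp.single (g l) (b l) = 0 :=
    hv (by simpa [map_sum, Finsupp.linearCombination_single] using h)
  simpa [Finsupp.finsetSum_apply, Finsupp.single_apply, sum_filter, eq_comm] using
    DFunLike.congr_fun hzero k

theorem LinearIndependent.comp_right_of_surjective {R ι α β : Type*} [Ring R] {v : ι → α → R}
    (hv : LinearIndependent R v) {d : β → α} (hd : Surjective d) :
    LinearIndependent R (fun i => v i ∘ d) :=
  hv.map' (LinearMap.funLeft R R d)
    (LinearMap.ker_eq_bot.2 (LinearMap.funLeft_injective_of_surjective R R d hd))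

theorem LinearIndependent.mul_prod {R ι κ α β : Type*} [CommRing R] [Fintype ι] [Fintype κ]
    {f : ι → α → R} {g : κ → β → R} (hf : LinearIndependent R f)
    (hg : LinearIndependent R g) :
    LinearIndependent R (fun p : ι × κ => fun x : α × β => f p.1 x.1 * g p.2 x.2) := by
  rw [Fintype.linearIndependent_iff] at hf hg ⊢
  intro c hc ⟨a, b⟩
  have hrow : ∀ y a, ∑ b, c (a, b) * g b y = 0 := fun y =>
    hf (fun a => ∑ b, c (a, b) * g b y) <| funext fun x => by
      simpa [Fintype.sum_prod_type, sum_mul, mul_sum, mul_comm, mul_left_comm] using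
        congrFun hc (x, y)
  exact hg (fun b => c (a, b)) (funext fun y => by simpa using hrow y a) b

theorem LinearIndependent.prod_pi {R ι α : Type*} [CommRing R] [Fintype ι]
    {ψ : ι → α → R} (hψ : LinearIndependent R ψ) (S : Type*) [Fintype S] :
    LinearIndependent R (fun g : S → ι => fun y : S → α => ∏ m, ψ (g m) (y m)) := by
  classical
  revert S
  refine @Fintype.induction_empty_option
    (fun S [Fintype S] => LinearIndependent R
      (fun g : S → ι => fun y : S → α => ∏ m, ψ (g m) (y m))) ?_ ?_ ?_
  · intro S S' _ e hS
    let := Fintype.ofEquiv S' e.symm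
    have hsurj : Surjective fun y : S' → α => y ∘ e := fun y => ⟨y ∘ e.symm, by ext; simp⟩
    have hfun : (fun g : S' → ι => fun y : S' → α => ∏ m, ψ (g m) (y m)) =
        fun g => (fun g : S → ι => fun y : S → α => ∏ m, ψ (g m) (y m)) (g ∘ e) ∘ (· ∘ e) := by
      ext g y
      exact (Fintype.prod_equiv e _ _ fun _ => rfl).symm
    rw [hfun]
    exact (hS.comp _ e.surjective.injective_comp_right).comp_right_of_surjective hsurj
  · exact .of_subsingleton' isEmptyElim fun r hr => by simpa using congrFun hr isEmptyElim
  · intro S _ hS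
    have hfun : (fun g : Option S → ι => fun y : Option S → α => ∏ m, ψ (g m) (y m)) =
        fun g => (fun p : ι × (S → ι) => fun x : α × (S → α) =>
          ψ p.1 x.1 * ∏ m, ψ (p.2 m) (x.2 m)) (Equiv.piOptionEquivProd g) ∘
            Equiv.piOptionEquivProd := by
      ext g y
      simp [Fintype.prod_option]
    rw [hfun]
    exact ((hψ.mul_prod hS).comp _ Equiv.piOptionEquivProd.injective).comp_right_of_surjective
      Equiv.piOptionEquivProd.surjective

theorem Equiv.Perm.eq_one_or_eq_swap_of_apply_eq_self {α : Type*} [DecidableEq α] {i j : α}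
    {ρ : Perm α} (h : ∀ m, m ≠ i → m ≠ j → ρ m = m) : ρ = 1 ∨ ρ = swap i j := by
  have eq_one : ∀ ρ : Perm α, (∀ m, m ≠ i → m ≠ j → ρ m = m) → ρ i = i → ρ = 1 := by
    intro ρ h hi
    have hj : ρ j = j := by
      by_contra hj
      by_cases hji : ρ j = i
      · exact hj (by rw [ρ.injective (hji.trans hi.symm)]; exact hi)
      · exact hj (ρ.injective (h _ hji hj))
    ext m
    by_cases hmi : m = i
    · rwa [hmi]
    by_cases hmj : m = j
    · rwa [hmj]
    exact h m hmi hmj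
  by_cases hi : ρ i = i
  · exact .inl (eq_one ρ h hi)
  right
  have hij : ρ i = j := by_contra fun hij => hi (ρ.injective (h _ hi hij))
  have hswap : swap i j * ρ = 1 :=
    eq_one _ (fun m hmi hmj => by simp [h m hmi hmj, swap_apply_of_ne_of_ne hmi hmj])
      (by simp [hij])
  rw [eq_inv_of_mul_eq_one_right hswap, swap_inv]

theorem Equiv.Perm.eq_or_eq_swap_mul_of_inv_apply_eq {α : Type*} [DecidableEq α] {i j : α}
    {σ τ : Perm α} (h : ∀ m, m ≠ i → m ≠ j → σ⁻¹ m = τ⁻¹ m) : σ = τ ∨ σ = swap i j * τ := by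
  rcases eq_one_or_eq_swap_of_apply_eq_self (i := i) (j := j) (ρ := τ * σ⁻¹) fun m hmi hmj => by
      rw [Perm.mul_apply, h m hmi hmj, ← Perm.mul_apply, mul_inv_cancel, Perm.one_apply] with hρ | hρ
  · exact .inl (mul_inv_eq_one.1 hρ).symm
  · right
    rw [mul_inv_eq_iff_eq_mul.1 hρ, ← mul_assoc, swap_mul_self, one_mul]

theorem Fintype.prod_eq_mul_mul_prod_ne_ne {α M : Type*} [Fintype α] [DecidableEq α]
    [CommMonoid M] (f : α → M) {i j : α} (hij : i ≠ j) :
    ∏ m, f m = f i * f j * ∏ m : {m // m ≠ i ∧ m ≠ j}, f m := by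
  rw [← prod_mul_prod_compl {i, j}, prod_pair hij,
    prod_subtype (p := fun m => m ≠ i ∧ m ≠ j) _ (by simp) f]

section SortedPair

variable {α : Type*} [LinearOrder α] {a b : α}

def sortedPair (h : a ≠ b) : {p : α × α // p.1 < p.2} :=
  ⟨(min a b, max a b), min_lt_max.2 h⟩

theorem mul_apply_sortedPair {M : Type*} [CommMagma M] (f : α → M) (h : a ≠ b) :
    f (sortedPair h).1.1 * f (sortedPair h).1.2 = f a * f b := by
  rcases le_total a b with hab | hab <;> simp [sortedPair, hab, mul_comm]

end SortedPair

section CoupledLabel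

variable {α : Type*} [LinearOrder α] {i j : α}

/-- What the summand of `σ` looks like on the diagonal `λ i = λ j`: the unordered pair of states
on the coupled coordinates, and the state on each remaining coordinate. -/
def coupledLabel (hij : i ≠ j) (σ : Perm α) :
    {p : α × α // p.1 < p.2} × ({m // m ≠ i ∧ m ≠ j} → α) :=
  (sortedPair (σ⁻¹.injective.ne hij), fun m => σ⁻¹ m)

theorem coupledLabel_eq_iff (hij : i ≠ j) {σ τ : Perm α} :
    coupledLabel hij σ = coupledLabel hij τ ↔ σ = τ ∨ σ = swap i j * τ := by
  refine ⟨fun h => Perm.eq_or_eq_swap_mul_of_inv_apply_eq fun m hmi hmj =>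
    congrFun (congrArg Prod.snd h) ⟨m, hmi, hmj⟩, ?_⟩
  rintro (rfl | rfl)
  · rfl
  · refine Prod.ext (Subtype.ext ?_) (funext fun m => ?_)
    · simp [coupledLabel, sortedPair, min_comm, max_comm]
    · simp [coupledLabel, swap_apply_of_ne_of_ne m.2.1 m.2.2]

theorem prod_apply_perm_eq_coupledLabel [Fintype α] {Λ M : Type*} [CommMonoid M]
    (hij : i ≠ j) (ψ : α → Λ → M) (σ : Perm α) {y : α → Λ} (hy : y i = y j) :
    ∏ k, ψ k (y (σ k)) =
      (ψ (coupledLabel hij σ).1.1.1 * ψ (coupledLabel hij σ).1.1.2) (y i) *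
        ∏ m, ψ ((coupledLabel hij σ).2 m) (y m) := by
  rw [Pi.mul_apply, coupledLabel, mul_apply_sortedPair (fun a => ψ a (y i))]
  calc ∏ k, ψ k (y (σ k)) = ∏ m, ψ (σ⁻¹ m) (y m) := by
        rw [← Equiv.prod_comp σ (fun m => ψ (σ⁻¹ m) (y m))]; simp
    _ = _ := by rw [Fintype.prod_eq_mul_mul_prod_ne_ne _ hij, hy]

end CoupledLabel

/-- The coefficient relation from the Appendix proof of Theorem 2: if the
permutation-product state `Ψ` vanishes on the partial diagonal `λ i = λ j` for a
spin-coupled pair `i ≠ j`, then `c (swap i j * σ) = − c σ` for every permutation. -/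
theorem coupled_pair_coefficient_relation {Λ : Type*} (n : ℕ) (ψ : Fin n → Λ → ℂ)
    (i j : Fin n) (hij : i ≠ j)
    (h1 : LinearIndependent ℂ ψ)
    (h2 : LinearIndependent ℂ
      (fun p : {p : Fin n × Fin n // p.1 < p.2} => ψ p.1.1 * ψ p.1.2))
    (c : Equiv.Perm (Fin n) → ℂ)
    (Ψ : (Fin n → Λ) → ℂ)
    (hΨ : ∀ lam : Fin n → Λ,
      Ψ lam = ∑ σ : Equiv.Perm (Fin n), c σ * ∏ k : Fin n, ψ k (lam (σ k)))
    (hvanish : ∀ lam : Fin n → Λ, lam i = lam j → Ψ lam = 0) :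
    ∀ σ : Equiv.Perm (Fin n), c (Equiv.swap i j * σ) = - c σ := by
  intro σ
  have hfiber := (h2.mul_prod (h1.prod_pi {m // m ≠ i ∧ m ≠ j})).sum_fiber_eq_zero (s := univ)
    (coupledLabel hij) c ?_ (coupledLabel hij σ)
  · have hpair : ({τ | coupledLabel hij τ = coupledLabel hij σ} : Finset _) =
        {σ, swap i j * σ} := by
      ext τ
      simp [coupledLabel_eq_iff]
    rw [hpair, sum_pair fun h => hij (swap_eq_one_iff.1 (mul_eq_right.1 h.symm))] at hfiber
    linear_combination hfiber
  · funext x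
    let lam : Fin n → Λ := fun m => if h : m ≠ i ∧ m ≠ j then x.2 ⟨m, h⟩ else x.1
    have hi : lam i = x.1 := by simp [lam]
    have hdiag : lam i = lam j := by simp [lam]
    have hoff : ∀ m : {m // m ≠ i ∧ m ≠ j}, lam m = x.2 m := fun m => dif_pos m.2
    have hzero := hvanish lam hdiag
    simp only [hΨ, prod_apply_perm_eq_coupledLabel hij ψ _ hdiag, hi, hoff] at hzero
    simpa using hzero
end

section
/- Let Λ be a type, n : ℕ, and ψ : Fin n → Λ → ℂ. Assume (i) the family ψ is linearly independent, and (ii) the pairwise product functions ψ a · ψ b : Λ → ℂ, indexed by unordered pairs {a, b} with a ≠ b, form a linearly independent family. Let c : Equiv.Perm (Fin n) → ℂ and define Ψ : (Fin n → Λ) → ℂ by Ψ(λ) = Σ_{σ} c σ · ∏_{k} ψ k (λ (σ k)). If Ψ(λ) = 0 whenever λ i = λ j for some pair i ≠ j, then c σ = Equiv.Perm.sign σ · c 1 for every σ, and hence Ψ(λ) = c 1 · det (Matrix.of fun i j => ψ i (λ j)) for all λ. -/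
/-!
Put the two coordinates `a ≠ b` of a configuration at a common point `x`, and pair every other
coordinate `t` with a finite combination of point evaluations dual to `ψ t` (such combinations
exist because `ψ` is linearly independent). Since `Ψ` vanishes on these configurations, only
`σ = 1` and `σ = (a b)` survive, leaving `(c 1 + c (a b)) ψ_a(x) ψ_b(x) = 0`; choosing `x` with
`ψ_a(x) ψ_b(x) ≠ 0` gives `c (a b) = -c 1`. Relabelling the coordinates turns this into
`c (σ (a b)) = -c σ`, so `c` is `c 1` times the sign, and `Ψ` is `c 1` times the Slater
determinant.
-/

open Finset Equiv

section

variable {K Λ : Type*}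

theorem LinearIndependent.exists_finsupp_linearCombination_eq [Field K] {κ : Type*} [Finite κ]
    {f : κ → Λ → K} (hf : LinearIndependent K f) (u : κ → K) :
    ∃ w : Λ →₀ K, ∀ l, Finsupp.linearCombination K (f l) w = u l := by
  classical
  have := Fintype.ofFinite κ
  set Θ : (Λ →₀ K) →ₗ[K] κ → K := Finsupp.linearCombination K (Function.swap f)
  have hΘ : ∀ w l, Θ w l = Finsupp.linearCombination K (f l) w := by
    simp [Θ, Finsupp.linearCombination_apply, Finsupp.sum]
  suffices Function.Surjective Θ by
    obtain ⟨w, hw⟩ := this u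
    exact ⟨w, fun l => by rw [← hΘ, hw]⟩
  rw [← LinearMap.dualMap_injective_iff, injective_iff_map_eq_zero]
  intro φ hφ
  have hφ_apply : ∀ v, φ v = ∑ l, v l * φ (Pi.single l 1) := by
    intro v
    conv_lhs => rw [← Finset.univ_sum_single v]
    rw [map_sum]
    refine sum_congr rfl fun l _ => ?_
    rw [← smul_eq_mul, ← map_smul, ← Pi.single_smul', smul_eq_mul, mul_one]
  have hcomb : ∑ l, φ (Pi.single l 1) • f l = 0 := by
    funext x
    have := LinearMap.congr_fun hφ (Finsupp.single x 1)
    rw [LinearMap.dualMap_apply, Finsupp.linearCombination_single, one_smul, hφ_apply] at this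
    simpa [mul_comm] using this
  ext l
  simpa using Fintype.linearIndependent_iff.mp hf _ hcomb l

theorem sum_mul_prod_linearCombination_eq_sum_piFinset [CommSemiring K] {ι α : Type*}
    [Fintype ι] [DecidableEq ι] [Fintype α] (c : α → K) (g : α → ι → Λ → K) (w : ι → Λ →₀ K) :
    ∑ σ, c σ * ∏ t, Finsupp.linearCombination K (g σ t) (w t) =
      ∑ v ∈ Fintype.piFinset fun t => (w t).support,
        (∏ t, w t (v t)) * ∑ σ, c σ * ∏ t, g σ t (v t) := by
  simp_rw [mul_sum, Finsupp.linearCombination_apply, Finsupp.sum, smul_eq_mul,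
    prod_univ_sum, mul_sum]
  rw [sum_comm]
  refine sum_congr rfl fun σ _ => sum_congr rfl fun v _ => ?_
  rw [mul_left_comm, ← prod_mul_distrib]

theorem Equiv.Perm.eq_one_or_eq_swap_of_forall_ne_ne {α : Type*} [DecidableEq α] {π : Perm α}
    {a b : α} (hπ : ∀ t, t ≠ a → t ≠ b → π t = t) : π = 1 ∨ π = swap a b := by
  have hmem : ∀ t, t = a ∨ t = b → π t = a ∨ π t = b := by
    intro t ht
    by_contra! h
    have := π.injective (hπ (π t) h.1 h.2)
    grind
  rcases hmem a (.inl rfl) with ha | ha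
  · left
    ext t
    rw [Perm.one_apply]
    grind [Equiv.apply_eq_iff_eq]
  · right
    ext t
    rw [swap_apply_def]
    grind [Equiv.apply_eq_iff_eq]

def VanishesOnCoincidences [Zero K] {ι : Type*} (F : (ι → Λ) → K) : Prop :=
  ∀ lam : ι → Λ, ¬ Function.Injective lam → F lam = 0

theorem VanishesOnCoincidences.comp_perm [Zero K] {ι : Type*} {F : (ι → Λ) → K}
    (hF : VanishesOnCoincidences F) (σ : Perm ι) :
    VanishesOnCoincidences fun lam => F (lam ∘ σ) := by
  intro lam hlam
  refine hF _ fun h => hlam ?_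
  simpa [Function.comp_assoc] using h.comp σ.symm.injective

section PermProduct

variable [Field K] {ι : Type*} [Fintype ι] [DecidableEq ι]

def permProductSum (ψ : ι → Λ → K) (c : Perm ι → K) (lam : ι → Λ) : K :=
  ∑ σ, c σ * ∏ k, ψ k (lam (σ k))

theorem permProductSum_eq_sum_prod_inv (ψ : ι → Λ → K) (c : Perm ι → K) (lam : ι → Λ) :
    permProductSum ψ c lam = ∑ σ, c σ * ∏ t, ψ (σ⁻¹ t) (lam t) := by
  refine sum_congr rfl fun σ _ => ?_
  rw [← Equiv.prod_comp σ (fun t => ψ (σ⁻¹ t) (lam t))]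
  simp

theorem permProductSum_mul_left (ψ : ι → Λ → K) (c : Perm ι → K) (σ : Perm ι) :
    permProductSum ψ (fun τ => c (σ * τ)) = fun lam => permProductSum ψ c (lam ∘ ⇑σ⁻¹) := by
  funext lam
  rw [permProductSum, permProductSum, ← Equiv.sum_comp (Equiv.mulLeft σ) (fun ρ => c ρ * _)]
  simp

theorem permProductSum_sign_mul (ψ : ι → Λ → K) (a : K) (lam : ι → Λ) :
    permProductSum ψ (fun σ => (Perm.sign σ : ℤ) * a) lam =
      a * (Matrix.of fun i j => ψ i (lam j)).det := by
  rw [← Matrix.det_transpose, Matrix.det_apply', mul_sum]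
  refine sum_congr rfl fun σ _ => ?_
  simp only [Matrix.transpose_apply, Matrix.of_apply]
  ring

theorem VanishesOnCoincidences.sum_mul_prod_linearCombination_eq_zero {ψ : ι → Λ → K}
    {c : Perm ι → K} (hc : VanishesOnCoincidences (permProductSum ψ c)) {w : ι → Λ →₀ K}
    {a b : ι} (hab : a ≠ b) {x : Λ} (hwa : w a = Finsupp.single x 1)
    (hwb : w b = Finsupp.single x 1) :
    ∑ σ, c σ * ∏ t, Finsupp.linearCombination K (ψ (σ⁻¹ t)) (w t) = 0 := by
  rw [sum_mul_prod_linearCombination_eq_sum_piFinset]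
  refine sum_eq_zero fun v hv => ?_
  have hva : v a = x := by simpa [hwa] using Fintype.mem_piFinset.mp hv a
  have hvb : v b = x := by simpa [hwb] using Fintype.mem_piFinset.mp hv b
  rw [← permProductSum_eq_sum_prod_inv, hc v fun h => hab (h (hva.trans hvb.symm)), mul_zero]

theorem VanishesOnCoincidences.coeff_one_add_coeff_swap {ψ : ι → Λ → K}
    (hψ : LinearIndependent K ψ) {c : Perm ι → K}
    (hc : VanishesOnCoincidences (permProductSum ψ c)) {a b : ι} (hab : a ≠ b)
    (hψab : ψ a * ψ b ≠ 0) : c 1 + c (swap a b) = 0 := by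
  obtain ⟨x, hx⟩ := Function.ne_iff.mp hψab
  choose w hw using fun t => hψ.exists_finsupp_linearCombination_eq (Pi.single t 1)
  set w' : ι → Λ →₀ K := fun t => if t = a ∨ t = b then Finsupp.single x 1 else w t
  set P : Perm ι → K := fun σ => ∏ t, Finsupp.linearCombination K (ψ (σ⁻¹ t)) (w' t)
  have hsum : ∑ σ, c σ * P σ = 0 :=
    hc.sum_mul_prod_linearCombination_eq_zero hab (x := x) (by simp [w']) (by simp [w'])
  have hP_off : ∀ (σ : Perm ι) t, t ≠ a → t ≠ b →
      Finsupp.linearCombination K (ψ (σ⁻¹ t)) (w' t) = if σ⁻¹ t = t then 1 else 0 := by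
    intro σ t hta htb
    simp [w', hta, htb, hw, Pi.single_apply]
  have hP_pair : ∀ σ : Perm ι, (∀ t, t ≠ a → t ≠ b → σ⁻¹ t = t) →
      P σ = ψ (σ⁻¹ a) x * ψ (σ⁻¹ b) x := by
    intro σ hσ
    rw [show P σ = ∏ t, _ from rfl, Fintype.prod_eq_mul a b hab]
    · simp [w']
    · rintro t ⟨hta, htb⟩
      rw [hP_off σ t hta htb, if_pos (hσ t hta htb)]
  have hP_zero : ∀ σ, σ ≠ 1 ∧ σ ≠ swap a b → P σ = 0 := by
    rintro σ ⟨hσ1, hσswap⟩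
    obtain ⟨t, hta, htb, ht⟩ : ∃ t, t ≠ a ∧ t ≠ b ∧ σ⁻¹ t ≠ t := by
      by_contra! h
      rcases Perm.eq_one_or_eq_swap_of_forall_ne_ne h with h' | h'
      · exact hσ1 (inv_eq_one.mp h')
      · exact hσswap (by rw [← inv_inv σ, h', swap_inv])
    exact prod_eq_zero (mem_univ t) (by rw [hP_off σ t hta htb, if_neg ht])
  rw [Fintype.sum_eq_add 1 (swap a b) (Ne.symm (swap_eq_one_iff.not.mpr hab))
    fun σ hσ => by rw [hP_zero σ hσ, mul_zero],
    hP_pair 1 fun t _ _ => rfl,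
    hP_pair (swap a b) fun t hta htb => by rw [swap_inv, swap_apply_of_ne_of_ne hta htb]] at hsum
  simp only [inv_one, Perm.one_apply, swap_inv, swap_apply_left, swap_apply_right] at hsum
  have : (c 1 + c (swap a b)) * (ψ a x * ψ b x) = 0 := by linear_combination hsum
  exact (mul_eq_zero.mp this).resolve_right hx

theorem VanishesOnCoincidences.coeff_mul_swap {ψ : ι → Λ → K} (hψ : LinearIndependent K ψ)
    (hψψ : ∀ a b, a ≠ b → ψ a * ψ b ≠ 0) {c : Perm ι → K}
    (hc : VanishesOnCoincidences (permProductSum ψ c)) (σ : Perm ι) {a b : ι} (hab : a ≠ b) :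
    c (σ * swap a b) = -c σ := by
  have hcσ : VanishesOnCoincidences (permProductSum ψ fun τ => c (σ * τ)) := by
    rw [permProductSum_mul_left]
    exact hc.comp_perm _
  have := hcσ.coeff_one_add_coeff_swap hψ hab (hψψ a b hab)
  rw [mul_one] at this
  exact eq_neg_of_add_eq_zero_right this

theorem VanishesOnCoincidences.coeff_eq_sign_mul_coeff_one {ψ : ι → Λ → K}
    (hψ : LinearIndependent K ψ) (hψψ : ∀ a b, a ≠ b → ψ a * ψ b ≠ 0) {c : Perm ι → K}
    (hc : VanishesOnCoincidences (permProductSum ψ c)) (σ : Perm ι) :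
    c σ = (Perm.sign σ : ℤ) * c 1 := by
  induction σ using Perm.swap_induction_on' with
  | one => simp
  | mul_swap σ a b hab ih =>
    rw [hc.coeff_mul_swap hψ hψψ σ hab, ih, Perm.sign_mul, Perm.sign_swap hab]
    push_cast
    ring

end PermProduct

end

/-- Theorem 2 (Pauli Exclusion Principle) for `n` particles: if the
permutation-product state `Ψ(λ) = Σ_σ c_σ ∏_k ψ_k(λ(σk))` vanishes whenever
two coordinates coincide, then `c_σ = sign σ · c_1` for every `σ`, i.e. `Ψ` is
`c_1` times the Slater determinant. -/
theorem pauli_exclusion {Λ : Type*} (n : ℕ) (ψ : Fin n → Λ → ℂ)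
    (h1 : LinearIndependent ℂ ψ)
    (h2 : LinearIndependent ℂ
      (fun p : {p : Fin n × Fin n // p.1 < p.2} => ψ p.1.1 * ψ p.1.2))
    (c : Equiv.Perm (Fin n) → ℂ)
    (Ψ : (Fin n → Λ) → ℂ)
    (hΨ : ∀ lam : Fin n → Λ,
      Ψ lam = ∑ σ : Equiv.Perm (Fin n), c σ * ∏ k : Fin n, ψ k (lam (σ k)))
    (hvanish : ∀ lam : Fin n → Λ, (∃ i j : Fin n, i ≠ j ∧ lam i = lam j) → Ψ lam = 0) :
    (∀ σ : Equiv.Perm (Fin n), c σ = ((Equiv.Perm.sign σ : ℤ) : ℂ) * c 1) ∧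
      ∀ lam : Fin n → Λ, Ψ lam = c 1 * (Matrix.of fun i j => ψ i (lam j)).det := by
  have hc : VanishesOnCoincidences (permProductSum ψ c) := fun lam hlam => by
    obtain ⟨i, j, hij, hne⟩ := Function.not_injective_iff.mp hlam
    rw [permProductSum, ← hΨ]
    exact hvanish lam ⟨i, j, hne, hij⟩
  have hψψ : ∀ a b, a ≠ b → ψ a * ψ b ≠ 0 := by
    intro a b hab
    rcases hab.lt_or_gt with h | h
    · exact h2.ne_zero ⟨(a, b), h⟩
    · exact mul_comm (ψ a) (ψ b) ▸ h2.ne_zero ⟨(b, a), h⟩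
  have hsign := hc.coeff_eq_sign_mul_coeff_one h1 hψψ
  refine ⟨hsign, fun lam => ?_⟩
  rw [hΨ, ← permProductSum_sign_mul]
  exact sum_congr rfl fun σ _ => by rw [hsign]
end

section
/- Let Λ be a type, n : ℕ, and ψ : Fin n → Λ → ℂ. Assume (i) the family ψ is linearly independent, and (ii) the pairwise product functions ψ a · ψ b : Λ → ℂ, indexed by unordered pairs {a, b} with a ≠ b, form a linearly independent family. Let c : Equiv.Perm (Fin n) → ℂ and define Ψ : (Fin n → Λ) → ℂ by Ψ(λ) = Σ_{σ} c σ · ∏_{k} ψ k (λ (σ k)). Then the following are equivalent: (a) Ψ(λ) = 0 whenever λ i = λ j for some pair i ≠ j; (b) c σ = Equiv.Perm.sign σ · c 1 for every σ, i.e., Ψ(λ) = c 1 · det (Matrix.of fun i j => ψ i (λ j)) for all λ. -/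
open Finset

private lemma peel_aux {Λ ι X : Type*} [Fintype ι] {f : ι → Λ → ℂ}
    (hf : LinearIndependent ℂ f) (G : ι → X → ℂ)
    (h : ∀ x y, ∑ a, G a x * f a y = 0) : ∀ a x, G a x = 0 := by
  intro a x
  refine Fintype.linearIndependent_iff.mp hf (fun a => G a x) ?_ a
  funext y
  simpa [Finset.sum_apply] using h x y

private def spS {n : ℕ} (i j : Fin n) (σ : Equiv.Perm (Fin n)) : Fin n × Fin n :=
  if σ⁻¹ i ≤ σ⁻¹ j then (σ⁻¹ i, σ⁻¹ j) else (σ⁻¹ j, σ⁻¹ i)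

private lemma spS_lt {n : ℕ} {i j : Fin n} (hij : i ≠ j) (σ : Equiv.Perm (Fin n)) :
    (spS i j σ).1 < (spS i j σ).2 := by
  have hne : σ⁻¹ i ≠ σ⁻¹ j := fun h => hij (σ⁻¹.injective h)
  unfold spS; split_ifs with h
  · exact lt_of_le_of_ne h hne
  · exact lt_of_not_ge h

private lemma spS_eval {Λ : Type*} {n : ℕ} (ψ : Fin n → Λ → ℂ) (i j : Fin n)
    (σ : Equiv.Perm (Fin n)) (y : Λ) :
    ψ (spS i j σ).1 y * ψ (spS i j σ).2 y = ψ (σ⁻¹ i) y * ψ (σ⁻¹ j) y := by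
  unfold spS; split_ifs <;> ring

set_option maxHeartbeats 1000000 in
private lemma claim_aux {Λ : Type*} {n : ℕ} {ψ : Fin n → Λ → ℂ}
    (h1 : LinearIndependent ℂ ψ)
    (h2 : LinearIndependent ℂ
      (fun p : {p : Fin n × Fin n // p.1 < p.2} => ψ p.1.1 * ψ p.1.2))
    {i j : Fin n} (hij : i ≠ j) (s : Finset (Fin n)) :
    i ∉ s → j ∉ s → ∀ d : Equiv.Perm (Fin n) → ℂ,
    (∀ μ : Fin n → Λ, ∑ σ : Equiv.Perm (Fin n),
        d σ * (ψ (σ⁻¹ i) (μ j) * ψ (σ⁻¹ j) (μ j) * ∏ m ∈ s, ψ (σ⁻¹ m) (μ m)) = 0) →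
    ∀ τ : Equiv.Perm (Fin n),
      ∑ σ ∈ univ.filter
        (fun σ => spS i j σ = spS i j τ ∧ ∀ m ∈ s, σ⁻¹ m = τ⁻¹ m), d σ = 0 := by
  induction s using Finset.induction_on with
  | empty =>
    intro _ _ d hd τ
    have key : ∀ p : {p : Fin n × Fin n // p.1 < p.2},
        ∑ σ ∈ univ.filter (fun σ => spS i j σ = p.1), d σ = 0 := by
      refine Fintype.linearIndependent_iff.mp h2
        (fun p => ∑ σ ∈ univ.filter (fun σ => spS i j σ = p.1), d σ) ?_
      funext y
      have h0 := hd (fun _ => y)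
      simp only [prod_empty, mul_one] at h0
      have grp := Finset.sum_fiberwise (univ : Finset (Equiv.Perm (Fin n)))
        (fun σ => (⟨spS i j σ, spS_lt hij σ⟩ : {p : Fin n × Fin n // p.1 < p.2}))
        (fun σ => d σ * (ψ (σ⁻¹ i) y * ψ (σ⁻¹ j) y))
      rw [Finset.sum_apply]
      calc ∑ p : {p : Fin n × Fin n // p.1 < p.2},
            ((∑ σ ∈ univ.filter (fun σ => spS i j σ = p.1), d σ) • (ψ p.1.1 * ψ p.1.2)) y
          = ∑ p : {p : Fin n × Fin n // p.1 < p.2},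
            ∑ σ ∈ univ.filter (fun σ =>
              (⟨spS i j σ, spS_lt hij σ⟩ : {p : Fin n × Fin n // p.1 < p.2}) = p),
              d σ * (ψ (σ⁻¹ i) y * ψ (σ⁻¹ j) y) := by
            refine Finset.sum_congr rfl fun p _ => ?_
            have hfe : univ.filter (fun σ =>
                (⟨spS i j σ, spS_lt hij σ⟩ : {p : Fin n × Fin n // p.1 < p.2}) = p)
                = univ.filter (fun σ => spS i j σ = p.1) := by
              apply Finset.filter_congr; intro σ _
              simp [Subtype.ext_iff]
            rw [hfe]
            simp only [Pi.smul_apply, Pi.mul_apply, smul_eq_mul, Finset.sum_mul]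
            refine Finset.sum_congr rfl fun σ hσ => ?_
            have hp : spS i j σ = p.1 := (Finset.mem_filter.mp hσ).2
            rw [← spS_eval ψ i j σ y, hp]
          _ = ∑ σ : Equiv.Perm (Fin n), d σ * (ψ (σ⁻¹ i) y * ψ (σ⁻¹ j) y) := grp
          _ = 0 := h0
    have := key ⟨spS i j τ, spS_lt hij τ⟩
    simpa using this
  | @insert a s ha ih =>
    intro hi hj d hd τ
    have hai : a ≠ i := fun h => hi (h ▸ Finset.mem_insert_self a s)
    have haj : a ≠ j := fun h => hj (h ▸ Finset.mem_insert_self a s)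
    have hi' : i ∉ s := fun h => hi (Finset.mem_insert_of_mem h)
    have hj' : j ∉ s := fun h => hj (Finset.mem_insert_of_mem h)
    have hsub : ∀ (v : Fin n) (μ : Fin n → Λ), ∑ σ : Equiv.Perm (Fin n),
        (if σ⁻¹ a = v then d σ else 0)
          * (ψ (σ⁻¹ i) (μ j) * ψ (σ⁻¹ j) (μ j) * ∏ m ∈ s, ψ (σ⁻¹ m) (μ m)) = 0 := by
      refine peel_aux h1 (fun (v : Fin n) (μ : Fin n → Λ) => ∑ σ : Equiv.Perm (Fin n),
        (if σ⁻¹ a = v then d σ else 0)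
          * (ψ (σ⁻¹ i) (μ j) * ψ (σ⁻¹ j) (μ j) * ∏ m ∈ s, ψ (σ⁻¹ m) (μ m))) ?_
      intro μ y
      have h0 := hd (Function.update μ a y)
      calc ∑ v : Fin n, (∑ σ : Equiv.Perm (Fin n), (if σ⁻¹ a = v then d σ else 0)
              * (ψ (σ⁻¹ i) (μ j) * ψ (σ⁻¹ j) (μ j) * ∏ m ∈ s, ψ (σ⁻¹ m) (μ m))) * ψ v y
          = ∑ σ : Equiv.Perm (Fin n), ∑ v : Fin n, (if σ⁻¹ a = v then d σ else 0)
              * (ψ (σ⁻¹ i) (μ j) * ψ (σ⁻¹ j) (μ j) * ∏ m ∈ s, ψ (σ⁻¹ m) (μ m)) * ψ v y := by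
            simp only [Finset.sum_mul]
            exact Finset.sum_comm
        _ = ∑ σ : Equiv.Perm (Fin n), d σ
              * (ψ (σ⁻¹ i) (μ j) * ψ (σ⁻¹ j) (μ j) * ∏ m ∈ s, ψ (σ⁻¹ m) (μ m)) * ψ (σ⁻¹ a) y := by
            refine Finset.sum_congr rfl fun σ _ => ?_
            simp [ite_mul, zero_mul, Finset.sum_ite_eq]
        _ = 0 := by
            rw [← h0]
            refine Finset.sum_congr rfl fun σ _ => ?_
            have e1 : Function.update μ a y j = μ j := by
              simp [Function.update_apply, haj.symm]
            have e2 : (∏ m ∈ insert a s, ψ (σ⁻¹ m) (Function.update μ a y m))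
                = ψ (σ⁻¹ a) y * ∏ m ∈ s, ψ (σ⁻¹ m) (μ m) := by
              rw [Finset.prod_insert ha]
              congr 1
              · simp [Function.update_apply]
              · refine Finset.prod_congr rfl fun m hm => ?_
                have : m ≠ a := fun h => ha (h ▸ hm)
                simp [Function.update_apply, this]
            rw [e1, e2]
            ring
    have key := fun v => ih hi' hj' (fun σ => if σ⁻¹ a = v then d σ else 0) (hsub v) τ
    have hset : univ.filter
          (fun σ : Equiv.Perm (Fin n) => spS i j σ = spS i j τ ∧ ∀ m ∈ insert a s, σ⁻¹ m = τ⁻¹ m)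
        = (univ.filter
            (fun σ : Equiv.Perm (Fin n) => spS i j σ = spS i j τ ∧ ∀ m ∈ s, σ⁻¹ m = τ⁻¹ m)).filter
            (fun σ => σ⁻¹ a = τ⁻¹ a) := by
      ext σ
      simp only [Finset.mem_filter, Finset.mem_univ, true_and, Finset.mem_insert,
        forall_eq_or_imp]
      tauto
    rw [hset, Finset.sum_filter]
    simpa using key (τ⁻¹ a)

set_option maxHeartbeats 1000000 in
private lemma swap_rel {Λ : Type*} {n : ℕ} {ψ : Fin n → Λ → ℂ}
    (h1 : LinearIndependent ℂ ψ)
    (h2 : LinearIndependent ℂ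
      (fun p : {p : Fin n × Fin n // p.1 < p.2} => ψ p.1.1 * ψ p.1.2))
    (c : Equiv.Perm (Fin n) → ℂ)
    (hv : ∀ lam : Fin n → Λ, (∃ i j : Fin n, i ≠ j ∧ lam i = lam j) →
      ∑ σ : Equiv.Perm (Fin n), c σ * ∏ k : Fin n, ψ k (lam (σ k)) = 0)
    {i j : Fin n} (hij : i ≠ j) (τ : Equiv.Perm (Fin n)) :
    c (Equiv.swap i j * τ) = - c τ := by
  have hi : i ∉ univ \ ({i, j} : Finset (Fin n)) := by simp
  have hj : j ∉ univ \ ({i, j} : Finset (Fin n)) := by simp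
  have hyp : ∀ μ : Fin n → Λ, ∑ σ : Equiv.Perm (Fin n),
      c σ * (ψ (σ⁻¹ i) (μ j) * ψ (σ⁻¹ j) (μ j)
        * ∏ m ∈ univ \ ({i, j} : Finset (Fin n)), ψ (σ⁻¹ m) (μ m)) = 0 := by
    intro μ
    set lam := Function.update μ i (μ j) with hlam
    have hli : lam i = μ j := by simp [hlam]
    have hlj : lam j = μ j := by simp [hlam, Function.update_apply, hij.symm]
    have h0 := hv lam ⟨i, j, hij, by rw [hli, hlj]⟩
    rw [← h0]
    refine Finset.sum_congr rfl fun σ _ => ?_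
    congr 1
    have hre : ∏ k : Fin n, ψ k (lam (σ k)) = ∏ m : Fin n, ψ (σ⁻¹ m) (lam m) := by
      rw [← Equiv.prod_comp σ (fun m => ψ (σ⁻¹ m) (lam m))]
      simp
    rw [hre, ← Finset.prod_sdiff (Finset.subset_univ ({i, j} : Finset (Fin n))),
      Finset.prod_pair hij, hli, hlj]
    have hsd : ∏ m ∈ univ \ ({i, j} : Finset (Fin n)), ψ (σ⁻¹ m) (lam m)
        = ∏ m ∈ univ \ ({i, j} : Finset (Fin n)), ψ (σ⁻¹ m) (μ m) := by
      refine Finset.prod_congr rfl fun m hm => ?_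
      have hmi : m ≠ i := by
        simp only [Finset.mem_sdiff, Finset.mem_insert, Finset.mem_singleton] at hm
        tauto
      simp [hlam, Function.update_apply, hmi]
    rw [hsd]
    ring
  have hcl := claim_aux h1 h2 hij (univ \ ({i, j} : Finset (Fin n))) hi hj c hyp τ
  have hne : τ ≠ Equiv.swap i j * τ := by
    intro h
    have h1' : (1 : Equiv.Perm (Fin n)) * τ = Equiv.swap i j * τ := by rwa [one_mul]
    exact hij (Equiv.swap_eq_one_iff.mp (mul_right_cancel h1'.symm))
  have hfib : univ.filter (fun σ : Equiv.Perm (Fin n) =>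
      spS i j σ = spS i j τ ∧ ∀ m ∈ univ \ ({i, j} : Finset (Fin n)), σ⁻¹ m = τ⁻¹ m)
      = {τ, Equiv.swap i j * τ} := by
    ext σ
    simp only [Finset.mem_filter, Finset.mem_univ, true_and, Finset.mem_insert,
      Finset.mem_singleton, Finset.mem_sdiff]
    constructor
    · rintro ⟨hsp, hrest⟩
      have hrest' : ∀ m : Fin n, m ≠ i → m ≠ j → σ⁻¹ m = τ⁻¹ m := by
        intro m hmi hmj
        exact hrest m (by simp [hmi, hmj])
      have hcases : (σ⁻¹ i = τ⁻¹ i ∧ σ⁻¹ j = τ⁻¹ j) ∨ (σ⁻¹ i = τ⁻¹ j ∧ σ⁻¹ j = τ⁻¹ i) := by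
        unfold spS at hsp
        split_ifs at hsp <;>
          simp only [Prod.mk.injEq] at hsp <;> tauto
      rcases hcases with ⟨e1, e2⟩ | ⟨e1, e2⟩
      · left
        apply inv_injective
        refine Equiv.ext fun m => ?_
        by_cases hmi : m = i
        · subst hmi; exact e1
        by_cases hmj : m = j
        · subst hmj; exact e2
        · exact hrest' m hmi hmj
      · right
        apply inv_injective
        refine Equiv.ext fun m => ?_
        have hswinv : (Equiv.swap i j * τ)⁻¹ m = τ⁻¹ (Equiv.swap i j m) := by
          simp [mul_inv_rev, Equiv.Perm.mul_apply]
        rw [hswinv]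
        by_cases hmi : m = i
        · subst hmi; rw [Equiv.swap_apply_left]; exact e1
        by_cases hmj : m = j
        · subst hmj; rw [Equiv.swap_apply_right]; exact e2
        · rw [Equiv.swap_apply_of_ne_of_ne hmi hmj]; exact hrest' m hmi hmj
    · have e1 : (Equiv.swap i j * τ)⁻¹ i = τ⁻¹ j := by
        simp [mul_inv_rev, Equiv.Perm.mul_apply]
      have e2 : (Equiv.swap i j * τ)⁻¹ j = τ⁻¹ i := by
        simp [mul_inv_rev, Equiv.Perm.mul_apply]
      rintro (rfl | rfl)
      · exact ⟨rfl, fun m _ => rfl⟩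
      · constructor
        · have hne' : τ⁻¹ i ≠ τ⁻¹ j := fun h => hij (τ⁻¹.injective h)
          unfold spS
          rw [e1, e2]
          rcases lt_or_gt_of_ne hne' with h | h
          · rw [if_pos h.le, if_neg (not_le.mpr h)]
          · rw [if_neg (not_le.mpr h), if_pos h.le]
        · intro m hm
          have hmi : m ≠ i := by rintro rfl; simp at hm
          have hmj : m ≠ j := by rintro rfl; simp at hm
          have hswinv : (Equiv.swap i j * τ)⁻¹ m = τ⁻¹ (Equiv.swap i j m) := by
            simp [mul_inv_rev, Equiv.Perm.mul_apply]
          rw [hswinv, Equiv.swap_apply_of_ne_of_ne hmi hmj]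
  rw [hfib, Finset.sum_pair hne] at hcl
  linear_combination hcl

set_option maxHeartbeats 1000000 in
/-- The paper's necessary and sufficient condition for Fermi–Dirac statistics:
the permutation-product state `Ψ` vanishes whenever two coordinates coincide iff
`c_σ = sign σ · c_1` for every `σ`, i.e. iff `Ψ` is `c_1` times the Slater
determinant. -/
theorem fermi_dirac_iff {Λ : Type*} (n : ℕ) (ψ : Fin n → Λ → ℂ)
    (h1 : LinearIndependent ℂ ψ)
    (h2 : LinearIndependent ℂ
      (fun p : {p : Fin n × Fin n // p.1 < p.2} => ψ p.1.1 * ψ p.1.2))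
    (c : Equiv.Perm (Fin n) → ℂ)
    (Ψ : (Fin n → Λ) → ℂ)
    (hΨ : ∀ lam : Fin n → Λ,
      Ψ lam = ∑ σ : Equiv.Perm (Fin n), c σ * ∏ k : Fin n, ψ k (lam (σ k))) :
    (∀ lam : Fin n → Λ, (∃ i j : Fin n, i ≠ j ∧ lam i = lam j) → Ψ lam = 0) ↔
      ((∀ σ : Equiv.Perm (Fin n), c σ = ((Equiv.Perm.sign σ : ℤ) : ℂ) * c 1) ∧
        ∀ lam : Fin n → Λ, Ψ lam = c 1 * (Matrix.of fun i j => ψ i (lam j)).det) := by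
  constructor
  · intro hvan
    have hv : ∀ lam : Fin n → Λ, (∃ i j : Fin n, i ≠ j ∧ lam i = lam j) →
        ∑ σ : Equiv.Perm (Fin n), c σ * ∏ k : Fin n, ψ k (lam (σ k)) = 0 := by
      intro lam h
      rw [← hΨ lam]; exact hvan lam h
    have hsign : ∀ σ : Equiv.Perm (Fin n), c σ = ((Equiv.Perm.sign σ : ℤ) : ℂ) * c 1 := by
      intro σ
      refine Equiv.Perm.swap_induction_on σ ?_ ?_
      · simp
      · intro f x y hxy hf
        rw [swap_rel h1 h2 c hv hxy f, hf]
        have : Equiv.Perm.sign (Equiv.swap x y * f) = - Equiv.Perm.sign f := by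
          rw [Equiv.Perm.sign_mul, Equiv.Perm.sign_swap hxy, neg_one_mul]
        rw [this]
        push_cast
        ring
    refine ⟨hsign, fun lam => ?_⟩
    rw [hΨ, Matrix.det_apply]
    have hterm : ∀ σ : Equiv.Perm (Fin n),
        ∏ k : Fin n, ψ k (lam (σ k)) = ∏ k : Fin n, ψ (σ⁻¹ k) (lam k) := by
      intro σ
      have := Equiv.prod_comp σ (fun k => ψ (σ⁻¹ k) (lam k))
      simpa using this
    calc ∑ σ : Equiv.Perm (Fin n), c σ * ∏ k : Fin n, ψ k (lam (σ k))
        = ∑ σ : Equiv.Perm (Fin n), c σ⁻¹ * ∏ k : Fin n, ψ (σ k) (lam k) := by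
          rw [← Equiv.sum_comp (Equiv.inv (Equiv.Perm (Fin n)))
            (fun σ => c σ⁻¹ * ∏ k : Fin n, ψ (σ k) (lam k))]
          refine Finset.sum_congr rfl fun σ _ => ?_
          simp only [Equiv.inv_apply, inv_inv]
          rw [hterm σ]
      _ = c 1 * ∑ σ : Equiv.Perm (Fin n),
            Equiv.Perm.sign σ • ∏ k : Fin n, (Matrix.of fun a b => ψ a (lam b)) (σ k) k := by
          rw [Finset.mul_sum]
          refine Finset.sum_congr rfl fun σ _ => ?_
          rw [hsign σ⁻¹]
          have hsi : Equiv.Perm.sign σ⁻¹ = Equiv.Perm.sign σ := Equiv.Perm.sign_inv σ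
          rw [hsi]
          simp only [Matrix.of_apply, Units.smul_def, zsmul_eq_mul]
          ring
  · rintro ⟨hsign, hdet⟩ lam ⟨i, j, hij, hlam⟩
    rw [hdet lam]
    have hz : (Matrix.of fun a b => ψ a (lam b)).det = 0 := by
      rw [← Matrix.det_transpose]
      refine Matrix.det_zero_of_row_eq hij ?_
      funext a
      simp [Matrix.transpose_apply, hlam]
    rw [hz, mul_zero]
end
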